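/- Let m ∈ ℕ with m ≥ 1, let r := 4m + 2 and let n ∈ ℕ be divisible by 2r(r+1). Let G be the complete balanced (r+1)-partite graph on n vertices (so each vertex class has size n/(r+1) and δ(G) = (1 − 1/(r+1))n). Then there is a labelling f: E(G) → {−1,1} so that every perfect K_r-tiling 𝒯 in G has discrepancy zero, i.e. Σ_{e ∈ E(𝒯)} f(e) = 0. -/

import Mathlib

/-- A perfect `K_r`-tiling of a graph `G`: a collection of vertex-disjoint
copies of `K_r` (given as `r`-cliques) covering every vertex. -/
def IsPerfectKTiling {V : Type*} (G : SimpleGraph V) (r : ℕ)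
    (T : Finset (Finset V)) : Prop :=
  (∀ S ∈ T, G.IsNClique r S) ∧
  (T : Set (Finset V)).Pairwise (fun S S' => Disjoint S S') ∧
  (∀ v : V, ∃ S ∈ T, v ∈ S)

/-- The edge set `E(𝒯)` of a tiling: the union of the edge sets of its cliques. -/
def tilingEdges {V : Type*} [DecidableEq V] (T : Finset (Finset V)) : Finset (Sym2 V) :=
  T.biUnion fun S => S.sym2.filter fun e => ¬ e.IsDiag

/-!
Put signs `χ = ±1` on all classes but one, `i₀`, half of them positive, and signs `g = ±1` on
the vertices of `i₀`, with `∑ g = N / 2` for classes of size `N`. An edge at `i₀` is labelled by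
`g` of its endpoint there, any other edge by the product of the signs of its two classes.
An `r`-clique misses exactly one of the `r + 1` classes, say `j`, so its sign sum is `-χ j`;
expanding `(∑ χ)²` then shows that twice the discrepancy of the clique is the sum over its
vertices of the weights `1 + 2 (r - 1) g` on `i₀` and `-1` elsewhere. A perfect tiling covers
every vertex once, so twice its discrepancy is the total weight `N + (r - 1) N - r N = 0`.
-/

open Finset SimpleGraph

namespace Finset

variable {α M : Type*}

theorem disjoint_sym2 {s t : Finset α} (h : Disjoint s t) : Disjoint s.sym2 t.sym2 := by
  refine disjoint_left.2 fun e hs ht => ?_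
  induction e using Sym2.ind with
  | _ a b => exact disjoint_left.1 h (mk_mem_sym2_iff.1 hs).1 (mk_mem_sym2_iff.1 ht).1

variable [DecidableEq α]

theorem two_nsmul_sum_sym2_filter_not_isDiag [AddCommMonoid M] (s : Finset α) (f : Sym2 α → M) :
    2 • ∑ e ∈ s.sym2 with ¬ e.IsDiag, f e = ∑ x ∈ s.offDiag, f s(x.1, x.2) := by
  rw [sym2_eq_image, Sym2.filter_image_mk_not_isDiag, smul_sum]
  refine sum_image' _ fun x hx => ?_
  obtain ⟨a, b⟩ := x
  have hab : a ≠ b := (mem_offDiag.1 hx).2.2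
  have hfiber : {y ∈ s.offDiag | Sym2.mk.uncurry y = s(a, b)} = {(a, b), (b, a)} := by
    ext ⟨c, d⟩
    simp only [mem_filter, mem_offDiag, Function.uncurry_apply_pair, Sym2.eq_iff, mem_insert,
      mem_singleton, Prod.mk.injEq]
    grind
  rw [Function.uncurry_apply_pair, hfiber, sum_pair (by simp [hab]), Sym2.eq_swap, two_nsmul]

theorem sum_offDiag_eq_sum_product_sub [AddCommGroup M] (s : Finset α) (f : α × α → M) :
    ∑ x ∈ s.offDiag, f x = ∑ x ∈ s ×ˢ s, f x - ∑ a ∈ s, f (a, a) := by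
  rw [← diag_union_offDiag, sum_union (disjoint_diag_offDiag s), sum_diag]
  abel

end Finset

section

variable {V : Type*}

def prodAddLabel (x y : V → ℤ) : Sym2 V → ℤ :=
  Sym2.lift ⟨fun u v => x u * x v + y u + y v, fun u v => by ring⟩

theorem two_mul_sum_prodAddLabel [DecidableEq V] (x y : V → ℤ) (s : Finset V) :
    2 * ∑ e ∈ s.sym2 with ¬ e.IsDiag, prodAddLabel x y e
      = (∑ u ∈ s, x u) ^ 2 - ∑ u ∈ s, x u ^ 2 + 2 * (#s - 1) * ∑ u ∈ s, y u := by
  rw [two_mul, ← two_nsmul, two_nsmul_sum_sym2_filter_not_isDiag,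
    sum_offDiag_eq_sum_product_sub]
  simp only [prodAddLabel, Sym2.lift_mk, sum_product, sum_add_distrib, ← mul_sum, ← sum_mul,
    sum_const, nsmul_eq_mul, sq]
  ring

end

section Tiling

variable {V M : Type*} [DecidableEq V] [AddCommMonoid M] {T : Finset (Finset V)}

theorem sum_tilingEdges (hT : (T : Set (Finset V)).Pairwise Disjoint) (f : Sym2 V → M) :
    ∑ e ∈ tilingEdges T, f e = ∑ S ∈ T, ∑ e ∈ S.sym2 with ¬ e.IsDiag, f e :=
  sum_biUnion fun _ hS _ hS' hne =>
    (disjoint_sym2 (hT hS hS' hne)).mono (filter_subset _ _) (filter_subset _ _)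

theorem IsPerfectKTiling.sum_sum_eq_sum [Fintype V] {G : SimpleGraph V} {r : ℕ}
    (hT : IsPerfectKTiling G r T) (w : V → M) : ∑ S ∈ T, ∑ u ∈ S, w u = ∑ u, w u := by
  rw [← sum_biUnion hT.2.1]
  congr
  ext u
  simpa using hT.2.2 u

end Tiling

namespace SimpleGraph.completeMultipartiteGraph

variable {ι : Type*} {V : ι → Type*}

theorem injOn_fst_of_isClique {S : Set (Σ i, V i)}
    (hS : (completeMultipartiteGraph V).IsClique S) : S.InjOn Sigma.fst := by
  intro u hu v hv huv
  by_contra hne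
  exact hS hu hv hne huv

theorem exists_sum_fst_eq_sum_sub [Fintype ι] [DecidableEq ι] {M : Type*} [AddCommGroup M]
    {S : Finset (Σ i, V i)}
    (hS : (completeMultipartiteGraph V).IsClique (S : Set (Σ i, V i)))
    (hcard : #S + 1 = Fintype.card ι) :
    ∃ j, ∀ φ : ι → M, ∑ u ∈ S, φ u.1 = ∑ i, φ i - φ j := by
  have himage : #(S.image Sigma.fst)ᶜ = 1 := by
    rw [card_compl, card_image_of_injOn (injOn_fst_of_isClique hS)]
    omega
  obtain ⟨j, hj⟩ := card_eq_one.1 himage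
  refine ⟨j, fun φ => ?_⟩
  rw [← sum_image (injOn_fst_of_isClique hS), ← compl_compl (S.image Sigma.fst), hj,
    eq_sub_iff_add_eq, ← sum_singleton φ j, sum_compl_add_sum]

end SimpleGraph.completeMultipartiteGraph

open SimpleGraph.completeMultipartiteGraph

section ExtremalLabelling

variable {ι α : Type*} [DecidableEq ι]

def extremalLabelling (i₀ : ι) (χ : ι → ℤ) (g : α → ℤ) : Sym2 ((_ : ι) × α) → ℤ :=
  prodAddLabel (fun u => χ u.1) (fun u => if u.1 = i₀ then g u.2 else 0)

variable {i₀ : ι} {χ : ι → ℤ} {g : α → ℤ}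

theorem extremalLabelling_eq_one_or_neg_one (hχ₀ : χ i₀ = 0)
    (hχ : ∀ i ≠ i₀, χ i = 1 ∨ χ i = -1) (hg : ∀ a, g a = 1 ∨ g a = -1)
    {e : Sym2 ((_ : ι) × α)} (he : e ∈ (completeMultipartiteGraph fun _ : ι => α).edgeSet) :
    extremalLabelling i₀ χ g e = 1 ∨ extremalLabelling i₀ χ g e = -1 := by
  induction e using Sym2.ind with
  | _ u v =>
  have huv : u.1 ≠ v.1 := by simpa using he
  simp only [extremalLabelling, prodAddLabel, Sym2.lift_mk]
  by_cases hu : u.1 = i₀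
  · simpa [hu, hχ₀, (hu ▸ huv).symm] using hg u.2
  by_cases hv : v.1 = i₀
  · simpa [hv, hχ₀, hu] using hg v.2
  rcases hχ _ hu with h | h <;> rcases hχ _ hv with h' | h' <;> simp [h, h', hu, hv]

theorem two_mul_sum_extremalLabelling_of_isClique [Fintype ι] [DecidableEq α] (hχ₀ : χ i₀ = 0)
    (hχ : ∀ i ≠ i₀, χ i = 1 ∨ χ i = -1) (hχsum : ∑ i, χ i = 0) {S : Finset ((_ : ι) × α)}
    (hS : (completeMultipartiteGraph fun _ : ι => α).IsClique (S : Set ((_ : ι) × α)))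
    (hcard : #S + 1 = Fintype.card ι) :
    2 * ∑ e ∈ S.sym2 with ¬ e.IsDiag, extremalLabelling i₀ χ g e
      = ∑ u ∈ S, if u.1 = i₀ then 1 + 2 * (#S - 1) * g u.2 else -1 := by
  have hsq : ∀ i, χ i ^ 2 = 1 - if i = i₀ then 1 else 0 := by
    intro i
    split_ifs with h
    · simp [h, hχ₀]
    · rcases hχ i h with h | h <;> simp [h]
  obtain ⟨j, hj⟩ := exists_sum_fst_eq_sum_sub (M := ℤ) hS hcard
  have hsumsq : (∑ u ∈ S, χ u.1) ^ 2 = ∑ u ∈ S, if u.1 = i₀ then 1 else 0 := by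
    rw [hj, hj fun i => if i = i₀ then 1 else 0, hχsum, sum_ite_eq', if_pos (mem_univ _),
      zero_sub, neg_sq, hsq]
  rw [extremalLabelling, two_mul_sum_prodAddLabel, hsumsq]
  simp only [hsq, ← sum_sub_distrib, mul_sum, ← sum_add_distrib]
  refine sum_congr rfl fun u _ => ?_
  split_ifs <;> ring

theorem sum_tilingEdges_extremalLabelling [Fintype ι] [Fintype α] [DecidableEq α] {r : ℕ}
    (hι : Fintype.card ι = r + 1) (hχ₀ : χ i₀ = 0) (hχ : ∀ i ≠ i₀, χ i = 1 ∨ χ i = -1)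
    (hχsum : ∑ i, χ i = 0) (hg : 2 * ∑ a, g a = Fintype.card α)
    {T : Finset (Finset ((_ : ι) × α))}
    (hT : IsPerfectKTiling (completeMultipartiteGraph fun _ : ι => α) r T) :
    ∑ e ∈ tilingEdges T, extremalLabelling i₀ χ g e = 0 := by
  set w : (_ : ι) × α → ℤ := fun u => if u.1 = i₀ then 1 + 2 * (r - 1) * g u.2 else -1
  have hclique : ∀ S ∈ T,
      2 * ∑ e ∈ S.sym2 with ¬ e.IsDiag, extremalLabelling i₀ χ g e = ∑ u ∈ S, w u := by
    intro S hS
    have hcard := (hT.1 S hS).card_eq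
    rw [two_mul_sum_extremalLabelling_of_isClique hχ₀ hχ hχsum (hT.1 S hS).isClique (by omega),
      hcard]
  have hw : ∑ u, w u = 0 := by
    have hrest : ∀ i ∈ ({i₀}ᶜ : Finset ι), ∑ a, w ⟨i, a⟩ = -Fintype.card α := fun i hi => by
      simp [w, (by simpa using hi : i ≠ i₀)]
    rw [Fintype.sum_sigma, Fintype.sum_eq_add_sum_compl i₀, sum_congr rfl hrest]
    simp only [w, if_pos, sum_add_distrib, ← mul_sum, sum_const, card_univ, card_compl,
      card_singleton, hι, Nat.add_sub_cancel, nsmul_eq_mul, mul_one]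
    linear_combination (r - 1 : ℤ) * hg
  have h2 : 2 * ∑ e ∈ tilingEdges T, extremalLabelling i₀ χ g e = 0 := by
    rw [sum_tilingEdges hT.2.1, mul_sum, sum_congr rfl hclique, hT.sum_sum_eq_sum, hw]
  omega

end ExtremalLabelling

def signBelow (K : ℕ) {n : ℕ} (i : Fin n) : ℤ := if (i : ℕ) < K then 1 else -1

theorem signBelow_eq_one_or_neg_one (K : ℕ) {n : ℕ} (i : Fin n) :
    signBelow K i = 1 ∨ signBelow K i = -1 := by
  unfold signBelow
  split_ifs <;> simp

theorem sum_signBelow {K n : ℕ} (h : K ≤ n) : ∑ i : Fin n, signBelow K i = 2 * K - n := by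
  unfold signBelow
  rw [Fin.sum_univ_eq_sum_range (fun i => if i < K then (1 : ℤ) else -1),
    ← sum_range_add_sum_Ico _ h, sum_congr rfl fun i hi => if_pos (mem_range.1 hi),
    sum_congr rfl fun i hi => if_neg (mem_Ico.1 hi).1.not_gt]
  simp only [sum_const, card_range, Nat.card_Ico, nsmul_eq_mul, mul_one, mul_neg]
  omega

theorem extremal_example_r_eq_two_mod_four_general (m r n : ℕ) (hr : r = 4 * m + 2)
    (hn : 2 * r * (r + 1) ∣ n) :
    ∃ f : Sym2 ((_ : Fin (r + 1)) × Fin (n / (r + 1))) → ℤ,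
      (∀ e ∈ (SimpleGraph.completeMultipartiteGraph
          fun _ : Fin (r + 1) => Fin (n / (r + 1))).edgeSet, f e = 1 ∨ f e = -1) ∧
      ∀ T : Finset (Finset ((_ : Fin (r + 1)) × Fin (n / (r + 1)))),
        IsPerfectKTiling
          (SimpleGraph.completeMultipartiteGraph fun _ : Fin (r + 1) => Fin (n / (r + 1))) r T →
        ∑ e ∈ tilingEdges T, f e = 0 := by
  obtain ⟨c, hN⟩ : 4 ∣ n / (r + 1) :=
    Nat.dvd_div_of_mul_dvd (dvd_trans ⟨2 * m + 1, by rw [hr]; ring⟩ hn)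
  let χ : Fin (r + 1) → ℤ := Fin.cons 0 (signBelow (2 * m + 1))
  have hχ₀ : χ 0 = 0 := rfl
  have hχ : ∀ i ≠ 0, χ i = 1 ∨ χ i = -1 := by
    intro i hi
    induction i using Fin.cases with
    | zero => exact absurd rfl hi
    | succ i => exact signBelow_eq_one_or_neg_one _ i
  have hχsum : ∑ i, χ i = 0 := by
    rw [Fin.sum_cons, sum_signBelow (by omega)]
    omega
  have hg : 2 * ∑ a : Fin (n / (r + 1)), signBelow (3 * c) a
      = Fintype.card (Fin (n / (r + 1))) := by
    rw [sum_signBelow (by omega), Fintype.card_fin, hN]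
    push_cast
    ring
  refine ⟨extremalLabelling 0 χ (signBelow (3 * c)), fun e he => ?_, fun T hT => ?_⟩
  · exact extremalLabelling_eq_one_or_neg_one hχ₀ hχ (signBelow_eq_one_or_neg_one _) he
  · exact sum_tilingEdges_extremalLabelling (Fintype.card_fin _) hχ₀ hχ hχsum hg hT

/-- Extremal example for `r ≡ 2 (mod 4)`: the complete balanced `(r+1)`-partite graph on
`n` vertices admits a `±1`-labelling for which every perfect `K_r`-tiling has discrepancy `0`. -/
theorem extremal_example_r_eq_two_mod_four (m r n : ℕ) (hm : 1 ≤ m) (hr : r = 4 * m + 2)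
    (hn : 2 * r * (r + 1) ∣ n) :
    ∃ f : Sym2 ((_ : Fin (r + 1)) × Fin (n / (r + 1))) → ℤ,
      (∀ e ∈ (SimpleGraph.completeMultipartiteGraph
          fun _ : Fin (r + 1) => Fin (n / (r + 1))).edgeSet, f e = 1 ∨ f e = -1) ∧
      ∀ T : Finset (Finset ((_ : Fin (r + 1)) × Fin (n / (r + 1)))),
        IsPerfectKTiling
          (SimpleGraph.completeMultipartiteGraph fun _ : Fin (r + 1) => Fin (n / (r + 1))) r T →
        ∑ e ∈ tilingEdges T, f e = 0 :=
  extremal_example_r_eq_two_mod_four_general m r n hr hn
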